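/- There exists a finite constant C > 0 such that for every measurable set E ⊆ ℝ of finite Lebesgue measure and every nonnegative measurable function f₂ on ℝ, ‖T(χ_E, f₂)‖_1 ≤ C |E|^{1/2} ‖f₂‖_1; that is, in dimension n = 2 the operator T is of restricted type at the point P = (1/2, 1; 1). -/

import Mathlib

open MeasureTheory ENNReal

/-- The `L^p` "norm" (with respect to Lebesgue measure on `ℝ`) of an
`ℝ≥0∞`-valued function, with the convention for `p = ∞`. -/
noncomputable def lpNorm (p : ℝ≥0∞) (g : ℝ → ℝ≥0∞) : ℝ≥0∞ :=
  if p = ∞ then essSup g (volume : Measure ℝ)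
  else (∫⁻ x, g x ^ p.toReal) ^ (1 / p.toReal)

/-- The bilinear spherical average in dimension `n = 2`:
`T(f₁,f₂)(x) = (1/(2π)) ∫₀^{2π} f₁(x − cos t) f₂(x − sin t) dt`. -/
noncomputable def T2 (f₁ f₂ : ℝ → ℝ) (x : ℝ) : ℝ≥0∞ :=
  (ENNReal.ofReal (2 * Real.pi))⁻¹ *
    ∫⁻ t in Set.Ioc 0 (2 * Real.pi),
      ENNReal.ofReal (f₁ (x - Real.cos t)) * ENNReal.ofReal (f₂ (x - Real.sin t))


/-!
Swapping the order of integration and translating in `x` turns `‖T(χ_E, f)‖₁` into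
`(2π)⁻¹ ∫ f(y) |{t ∈ (0, 2π] : y + sin t - cos t ∈ E}| dy`, so it suffices to bound
`|{t : sin t - cos t ∈ B}|` by `C |B|^{1/2}`. Since `sin t - cos t = √2 sin (t - π/4)`, periodicity
and the symmetry `sin (π - u) = sin u` reduce this to `{u ∈ [-π/2, π/2] : sin u ∈ B}`. There `sin`
is injective, so the change of variables formula bounds the part where `cos u ≥ δ` by `|B| / δ`,
while by Jordan's inequality `cos u < δ` only on a set of measure `≤ π δ`. Take `δ = |B|^{1/2}`.
-/

open Set Real

section

variable {G : Type*} [MeasurableSpace G] [AddCommGroup G] [MeasurableAdd₂ G] [MeasurableSub₂ G]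
  {ν : Measure G} [SFinite ν] [ν.IsAddRightInvariant]
  {T : Type*} [MeasurableSpace T] {μ : Measure T} [SFinite μ]

theorem lintegral_lintegral_comp_sub_mul_comp_sub {g h : G → ℝ≥0∞} (hg : Measurable g)
    (hh : Measurable h) {a b : T → G} (ha : Measurable a) (hb : Measurable b) :
    ∫⁻ x, ∫⁻ t, g (x - a t) * h (x - b t) ∂μ ∂ν =
      ∫⁻ y, (∫⁻ t, g (y + (b t - a t)) ∂μ) * h y ∂ν := by
  have htranslate (t : T) :
      ∫⁻ x, g (x - a t) * h (x - b t) ∂ν = ∫⁻ y, g (y + (b t - a t)) * h y ∂ν := by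
    simpa only [sub_add_sub_cancel] using
      lintegral_sub_right_eq_self (μ := ν) (fun y => g (y + (b t - a t)) * h y) (b t)
  rw [lintegral_lintegral_swap ((hg.comp (measurable_fst.sub (ha.comp measurable_snd))).mul
      (hh.comp (measurable_fst.sub (hb.comp measurable_snd)))).aemeasurable]
  simp_rw [htranslate]
  rw [lintegral_lintegral_swap ((hg.comp (measurable_snd.add
      ((hb.comp measurable_fst).sub (ha.comp measurable_fst)))).mul
      (hh.comp measurable_snd)).aemeasurable]
  exact lintegral_congr fun y => lintegral_mul_const _
    (hg.comp (measurable_const.add (hb.sub ha)))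

end

theorem Function.Periodic.volume_preimage_inter_Ioc_eq {f : ℝ → ℝ} {T : ℝ}
    (hf : f.Periodic T) (hT : 0 < T) (hfm : Measurable f) {B : Set ℝ} (hB : MeasurableSet B)
    (a b : ℝ) :
    volume (f ⁻¹' B ∩ Ioc a (a + T)) = volume (f ⁻¹' B ∩ Ioc b (b + T)) := by
  refine (isAddFundamentalDomain_Ioc hT a).measure_set_eq (isAddFundamentalDomain_Ioc hT b)
    (hfm hB) fun ⟨_, n, rfl⟩ => ?_
  ext x
  simp [AddSubgroup.vadd_def, add_comm _ x, hf.int_mul n x]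

theorem ofReal_mul_volume_le_volume_image {f f' : ℝ → ℝ} {s : Set ℝ} (hs : MeasurableSet s)
    (hf' : ∀ x ∈ s, HasDerivWithinAt f (f' x) s x) (hf : InjOn f s) {δ : ℝ}
    (hδ : ∀ x ∈ s, δ ≤ |f' x|) :
    ENNReal.ofReal δ * volume s ≤ volume (f '' s) :=
  calc ENNReal.ofReal δ * volume s = ∫⁻ _ in s, ENNReal.ofReal δ := by
        rw [setLIntegral_const, mul_comm]
    _ ≤ ∫⁻ x in s, ENNReal.ofReal |f' x| :=
        setLIntegral_mono' hs fun x hx => ENNReal.ofReal_le_ofReal (hδ x hx)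
    _ = volume (f '' s) := by
        simpa using (lintegral_image_eq_lintegral_abs_deriv_mul hs hf' hf 1).symm

theorem le_ofReal_mul_rpow_of_forall_le {x a : ℝ≥0∞} {c : ℝ} (hc : 0 ≤ c)
    (h : ∀ δ : ℝ, 0 < δ → x ≤ a / ENNReal.ofReal δ + ENNReal.ofReal (c * δ)) :
    x ≤ ENNReal.ofReal (1 + c) * a ^ (1 / 2 : ℝ) := by
  rcases eq_or_ne a ∞ with rfl | ha_top
  · rw [top_rpow_of_pos (by norm_num), mul_top (by simp; linarith)]
    exact le_top
  rcases eq_or_ne a 0 with rfl | ha_zero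
  · rw [zero_rpow_of_pos (by norm_num), mul_zero]
    refine ENNReal.le_of_forall_pos_le_add fun ε hε _ => ?_
    calc x ≤ 0 / ENNReal.ofReal (ε / (c + 1)) + ENNReal.ofReal (c * (ε / (c + 1))) :=
          h _ (by positivity)
      _ ≤ 0 + ε := by
          rw [ENNReal.zero_div, zero_add, zero_add, ← ENNReal.ofReal_coe_nnreal]
          refine ENNReal.ofReal_le_ofReal ?_
          rw [mul_div_assoc', div_le_iff₀ (by positivity)]
          nlinarith [hε.le]
  · set r := √a.toReal
    have hr : 0 < r := sqrt_pos.2 (ENNReal.toReal_pos ha_zero ha_top)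
    have ha : a = ENNReal.ofReal r * ENNReal.ofReal r := by
      rw [← ENNReal.ofReal_mul hr.le, mul_self_sqrt ENNReal.toReal_nonneg, ofReal_toReal ha_top]
    calc x ≤ a / ENNReal.ofReal r + ENNReal.ofReal (c * r) := h r hr
      _ = ENNReal.ofReal (1 + c) * ENNReal.ofReal r := by
          rw [ha, mul_div_assoc, ENNReal.div_self (by simpa using hr) ofReal_ne_top, mul_one,
            ← ENNReal.ofReal_mul (by linarith), ← ENNReal.ofReal_add hr.le (by positivity)]
          ring_nf
      _ = ENNReal.ofReal (1 + c) * a ^ (1 / 2 : ℝ) := by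
          rw [← ofReal_toReal ha_top, ofReal_rpow_of_nonneg ENNReal.toReal_nonneg (by norm_num),
            ← sqrt_eq_rpow]

theorem volume_cos_lt_inter_Icc_le {δ : ℝ} (hδ : 0 ≤ δ) :
    volume ({u | cos u < δ} ∩ Icc (-(π / 2)) (π / 2)) ≤ ENNReal.ofReal (π * δ) := by
  have hsub : {u | cos u < δ} ∩ Icc (-(π / 2)) (π / 2) ⊆
      Icc (-(π / 2)) (-(π / 2) + π * δ / 2) ∪ Icc (π / 2 - π * δ / 2) (π / 2) := by
    rintro u ⟨hcos, hu₁, hu₂⟩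
    have hpi := pi_pos
    have hcos : π * cos u < π * δ := mul_lt_mul_of_pos_left hcos hpi
    rcases le_total u 0 with hu | hu
    · have := one_add_mul_le_cos hu₁ hu
      field_simp at this
      exact Or.inl ⟨hu₁, by nlinarith⟩
    · have := one_sub_mul_le_cos hu hu₂
      field_simp at this
      exact Or.inr ⟨by nlinarith, hu₂⟩
  calc volume ({u | cos u < δ} ∩ Icc (-(π / 2)) (π / 2))
      ≤ ENNReal.ofReal (π * δ / 2) + ENNReal.ofReal (π * δ / 2) := by
        refine (measure_mono hsub).trans ((measure_union_le _ _).trans_eq ?_)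
        simp only [Real.volume_Icc]
        ring_nf
    _ = ENNReal.ofReal (π * δ) := by
        rw [← ENNReal.ofReal_add (by positivity) (by positivity)]
        ring_nf

theorem volume_sin_preimage_inter_Icc_le {B : Set ℝ} (hB : MeasurableSet B) {δ : ℝ}
    (hδ : 0 < δ) :
    volume (sin ⁻¹' B ∩ Icc (-(π / 2)) (π / 2)) ≤
      volume B / ENNReal.ofReal δ + ENNReal.ofReal (π * δ) := by
  set good := sin ⁻¹' B ∩ {u | δ ≤ cos u} ∩ Icc (-(π / 2)) (π / 2)
  have hgood : MeasurableSet good :=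
    ((measurable_sin hB).inter (measurableSet_le measurable_const measurable_cos)).inter
      measurableSet_Icc
  have hgood_le : volume good ≤ volume B / ENNReal.ofReal δ := by
    rw [ENNReal.le_div_iff_mul_le (by simp [hδ]) (by simp), mul_comm]
    calc ENNReal.ofReal δ * volume good ≤ volume (sin '' good) :=
          ofReal_mul_volume_le_volume_image hgood (fun u _ => (hasDerivAt_sin u).hasDerivWithinAt)
            (injOn_sin.mono inter_subset_right) fun u hu => hu.1.2.trans (le_abs_self _)
      _ ≤ volume B := measure_mono (image_subset_iff.2 fun u hu => hu.1.1)
  calc volume (sin ⁻¹' B ∩ Icc (-(π / 2)) (π / 2))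
      ≤ volume (good ∪ {u | cos u < δ} ∩ Icc (-(π / 2)) (π / 2)) := by
        refine measure_mono fun u ⟨hu, hIcc⟩ => ?_
        by_cases hcos : δ ≤ cos u
        · exact Or.inl ⟨⟨hu, hcos⟩, hIcc⟩
        · exact Or.inr ⟨not_le.1 hcos, hIcc⟩
    _ ≤ volume B / ENNReal.ofReal δ + ENNReal.ofReal (π * δ) :=
        (measure_union_le _ _).trans (add_le_add hgood_le (volume_cos_lt_inter_Icc_le hδ.le))

theorem volume_preimage_pi_sub (s : Set ℝ) : volume ((fun u => π - u) ⁻¹' s) = volume s := by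
  have : (fun u => π - u) ⁻¹' s = (fun u => u + -π) ⁻¹' (Neg.neg ⁻¹' s) := by
    ext u
    simp [sub_eq_add_neg]
  rw [this, measure_preimage_add_right, Measure.measure_preimage_neg]

theorem volume_sin_preimage_inter_Ioc_le {B : Set ℝ} (hB : MeasurableSet B) {δ : ℝ}
    (hδ : 0 < δ) :
    volume (sin ⁻¹' B ∩ Ioc (-(π / 2)) (-(π / 2) + 2 * π)) ≤
      2 * (volume B / ENNReal.ofReal δ + ENNReal.ofReal (π * δ)) := by
  set S := sin ⁻¹' B ∩ Icc (-(π / 2)) (π / 2)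
  calc volume (sin ⁻¹' B ∩ Ioc (-(π / 2)) (-(π / 2) + 2 * π))
      ≤ volume (S ∪ (fun u => π - u) ⁻¹' S) := by
        refine measure_mono fun u ⟨hu, hu₁, hu₂⟩ => ?_
        rcases le_total u (π / 2) with h | h
        · exact Or.inl ⟨hu, hu₁.le, h⟩
        · exact Or.inr ⟨by simpa only [mem_preimage, sin_pi_sub] using hu,
            by linarith, by linarith⟩
    _ ≤ volume S + volume S :=
        (measure_union_le _ _).trans_eq (by rw [volume_preimage_pi_sub])
    _ ≤ 2 * (volume B / ENNReal.ofReal δ + ENNReal.ofReal (π * δ)) := by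
        rw [← two_mul]
        gcongr
        exact volume_sin_preimage_inter_Icc_le hB hδ

theorem sin_sub_cos (t : ℝ) : sin t - cos t = √2 * sin (t - π / 4) := by
  rw [sin_sub, cos_pi_div_four, sin_pi_div_four]
  ring_nf
  rw [sq_sqrt zero_le_two]
  ring

theorem volume_sin_sub_cos_preimage_inter_Ioc_le {B : Set ℝ} (hB : MeasurableSet B) :
    volume ((fun t => sin t - cos t) ⁻¹' B ∩ Ioc 0 (2 * π)) ≤
      ENNReal.ofReal (1 + 4 * π) * volume B ^ (1 / 2 : ℝ) := by
  set B' := (√2 * ·) ⁻¹' B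
  have hB' : MeasurableSet B' := hB.preimage (measurable_const_mul _)
  have hvolB' : volume B' ≤ volume B := by
    rw [volume_preimage_mul_left (by positivity)]
    refine mul_le_of_le_one_left zero_le (ENNReal.ofReal_le_one.2 ?_)
    rw [abs_inv, abs_of_pos (by positivity)]
    exact inv_le_one_of_one_le₀ (one_le_sqrt.2 one_le_two)
  refine le_ofReal_mul_rpow_of_forall_le (by positivity) fun δ hδ => ?_
  calc volume ((fun t => sin t - cos t) ⁻¹' B ∩ Ioc 0 (2 * π))
      ≤ volume ((· + -(π / 4)) ⁻¹' (sin ⁻¹' B' ∩ Ioc (-(π / 4)) (-(π / 4) + 2 * π))) := by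
        refine measure_mono fun t ⟨ht, ht₁, ht₂⟩ => ?_
        simp only [mem_preimage, sin_sub_cos, ← sub_eq_add_neg] at ht ⊢
        exact ⟨ht, by linarith, by linarith⟩
    _ = volume (sin ⁻¹' B' ∩ Ioc (-(π / 2)) (-(π / 2) + 2 * π)) := by
        rw [measure_preimage_add_right,
          sin_periodic.volume_preimage_inter_Ioc_eq two_pi_pos measurable_sin hB']
    _ ≤ 2 * (volume B' / ENNReal.ofReal (2 * δ) + ENNReal.ofReal (π * (2 * δ))) :=
        volume_sin_preimage_inter_Ioc_le hB' (by positivity)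
    _ = volume B' / ENNReal.ofReal δ + ENNReal.ofReal (4 * π * δ) := by
        rw [mul_add, ENNReal.ofReal_mul zero_le_two, ENNReal.ofReal_ofNat, ← mul_div_assoc,
          ENNReal.mul_div_mul_left _ _ two_ne_zero ofNat_ne_top, ← ENNReal.ofReal_ofNat 2,
          ← ENNReal.ofReal_mul zero_le_two]
        ring_nf
    _ ≤ volume B / ENNReal.ofReal δ + ENNReal.ofReal (4 * π * δ) := by gcongr

theorem setLIntegral_indicator_add_sin_sub_cos_le {E : Set ℝ} (hE : MeasurableSet E) (y : ℝ) :
    ∫⁻ t in Ioc 0 (2 * π), ENNReal.ofReal (E.indicator (fun _ => 1) (y + (sin t - cos t))) ≤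
      ENNReal.ofReal (1 + 4 * π) * volume E ^ (1 / 2 : ℝ) := by
  set A := (fun t => sin t - cos t) ⁻¹' ((y + ·) ⁻¹' E)
  have hA : MeasurableSet A :=
    (measurable_sin.sub measurable_cos) (hE.preimage (measurable_const_add y))
  have hindicator (t : ℝ) :
      ENNReal.ofReal (E.indicator (fun _ => 1) (y + (sin t - cos t))) = A.indicator 1 t := by
    by_cases ht : y + (sin t - cos t) ∈ E <;> simp [A, ht]
  simp_rw [hindicator]
  rw [lintegral_indicator_one hA, Measure.restrict_apply hA, ← measure_preimage_add _ y E]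
  exact volume_sin_sub_cos_preimage_inter_Ioc_le (hE.preimage (measurable_const_add y))

theorem lpNorm_one (g : ℝ → ℝ≥0∞) : _root_.lpNorm 1 g = ∫⁻ x, g x := by
  simp [_root_.lpNorm]

theorem restricted_type_at_P :
    ∃ C : ℝ, 0 < C ∧ ∀ E : Set ℝ, MeasurableSet E → volume E < ∞ →
      ∀ f₂ : ℝ → ℝ, Measurable f₂ → (∀ x, 0 ≤ f₂ x) →
      lpNorm 1 (T2 (E.indicator fun _ => (1 : ℝ)) f₂) ≤ ENNReal.ofReal C *
        volume E ^ ((1 : ℝ) / 2) *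
        lpNorm 1 (fun x => ENNReal.ofReal (f₂ x)) := by
  refine ⟨(1 + 4 * π) / (2 * π), by positivity, fun E hE hE_fin f₂ hf₂ _ => ?_⟩
  set χ := E.indicator fun _ => (1 : ℝ)
  have hχ : Measurable fun z => ENNReal.ofReal (χ z) :=
    ENNReal.measurable_ofReal.comp (measurable_const.indicator hE)
  have hf : Measurable fun z => ENNReal.ofReal (f₂ z) := ENNReal.measurable_ofReal.comp hf₂
  have hK : ENNReal.ofReal (1 + 4 * π) * volume E ^ (1 / 2 : ℝ) ≠ ∞ :=
    mul_ne_top ofReal_ne_top (rpow_ne_top_of_nonneg (by norm_num) hE_fin.ne)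
  calc lpNorm 1 (T2 χ f₂)
      = (ENNReal.ofReal (2 * π))⁻¹ * ∫⁻ y, (∫⁻ t in Ioc 0 (2 * π),
          ENNReal.ofReal (χ (y + (sin t - cos t)))) * ENNReal.ofReal (f₂ y) := by
        rw [lpNorm_one, ← lintegral_lintegral_comp_sub_mul_comp_sub hχ hf measurable_cos
          measurable_sin, ← lintegral_const_mul' _ _ (ENNReal.inv_ne_top.2 (by simp [pi_pos]))]
        rfl
    _ ≤ (ENNReal.ofReal (2 * π))⁻¹ * ∫⁻ y,
          ENNReal.ofReal (1 + 4 * π) * volume E ^ (1 / 2 : ℝ) * ENNReal.ofReal (f₂ y) := by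
        gcongr with y
        exact setLIntegral_indicator_add_sin_sub_cos_le hE y
    _ = ENNReal.ofReal ((1 + 4 * π) / (2 * π)) * volume E ^ ((1 : ℝ) / 2) *
          lpNorm 1 (fun x => ENNReal.ofReal (f₂ x)) := by
        rw [lpNorm_one, lintegral_const_mul' _ _ hK, ENNReal.ofReal_div_of_pos (by positivity),
          ENNReal.div_eq_inv_mul]
        ring
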